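/- Let p be a prime, m ≥ 1, q = p^m, let K be a field of characteristic p, and let θ ∈ K. Suppose s ∈ K⟦X⟧ satisfies (1 − θ·X)·s = s^{(q)} and has nonzero constant coefficient. Then a series s' ∈ K⟦X⟧ satisfies (1 − θ·X)·s' = s'^{(q)} if and only if s' = r·s for some r ∈ K⟦X⟧ all of whose coefficients c satisfy c^q = c (i.e. r has coefficients in the fixed field 𝔽_q, so the solution is unique up to multiplication by elements of 𝔽_q⟦X⟧, and up to units of 𝔽_q⟦X⟧ among unit solutions). -/

import Mathlib

/-- **Uniqueness of the universal uniformizer up to `𝔽_q⟦X⟧`.**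
Let `p` be a prime, `m ≥ 1`, `q = p^m`, `K` a field of characteristic `p`, and
`θ ∈ K`.  Suppose `s ∈ K⟦X⟧` satisfies `(1 - θ·X) * s = s^{(q)}` (where `s^{(q)}`
raises each coefficient to the `q`-th power) and has nonzero constant
coefficient.  Then `s' ∈ K⟦X⟧` satisfies `(1 - θ·X) * s' = s'^{(q)}` if and only
if `s' = r * s` for some power series `r` all of whose coefficients `c` satisfy
`c^q = c`, i.e. `r` has coefficients in the fixed field `𝔽_q`. -/
theorem carlitz_uniformizer_unique (p m q : ℕ) [Fact p.Prime] (hm : 1 ≤ m)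
    (hq : q = p ^ m) (K : Type*) [Field K] [CharP K p] (θ : K)
    (s : PowerSeries K)
    (hs : (1 - PowerSeries.C θ * PowerSeries.X) * s =
        PowerSeries.map (iterateFrobenius K p m) s)
    (h0 : PowerSeries.constantCoeff s ≠ 0) (s' : PowerSeries K) :
    (1 - PowerSeries.C θ * PowerSeries.X) * s' =
        PowerSeries.map (iterateFrobenius K p m) s' ↔
      ∃ r : PowerSeries K,
        (∀ i : ℕ, (PowerSeries.coeff i r) ^ q = PowerSeries.coeff i r) ∧
        s' = r * s := by
  have hsne : s ≠ 0 := fun h => h0 (by simp [h])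
  have hmapne : PowerSeries.map (iterateFrobenius K p m) s ≠ 0 := by
    intro h
    apply h0
    have := congrArg (PowerSeries.coeff 0) h
    simp only [map_zero, PowerSeries.coeff_map, iterateFrobenius_def,
      PowerSeries.coeff_zero_eq_constantCoeff] at this
    exact pow_eq_zero_iff (pow_ne_zero m (Nat.Prime.ne_zero Fact.out)) |>.mp this
  constructor
  · intro hs'
    refine ⟨s' * s⁻¹, ?_, ?_⟩
    · -- first show map σ (s' * s⁻¹) = s' * s⁻¹
      have hr : PowerSeries.map (iterateFrobenius K p m) (s' * s⁻¹) = s' * s⁻¹ := by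
        have hinv : s * s⁻¹ = 1 := PowerSeries.mul_inv_cancel _ h0
        have key : (s' * s⁻¹) * PowerSeries.map (iterateFrobenius K p m) s =
            PowerSeries.map (iterateFrobenius K p m) (s' * s⁻¹) *
              PowerSeries.map (iterateFrobenius K p m) s := by
          rw [← map_mul]
          calc (s' * s⁻¹) * PowerSeries.map (iterateFrobenius K p m) s
              = (s' * s⁻¹) * ((1 - PowerSeries.C θ * PowerSeries.X) * s) := by rw [hs]
            _ = ((1 - PowerSeries.C θ * PowerSeries.X) * s') * (s⁻¹ * s) := by ring
            _ = PowerSeries.map (iterateFrobenius K p m) s' * (s⁻¹ * s) := by rw [hs']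
            _ = PowerSeries.map (iterateFrobenius K p m) s' * (s * s⁻¹) := by ring
            _ = PowerSeries.map (iterateFrobenius K p m) s' := by rw [hinv, mul_one]
            _ = PowerSeries.map (iterateFrobenius K p m) (s' * s⁻¹ * s) := by
                rw [mul_assoc, PowerSeries.inv_mul_cancel _ h0, mul_one]
        exact (mul_right_cancel₀ hmapne key).symm
      intro i
      have := congrArg (PowerSeries.coeff i) hr
      rw [PowerSeries.coeff_map, iterateFrobenius_def] at this
      rw [hq]; exact this
    · rw [mul_assoc, PowerSeries.inv_mul_cancel _ h0, mul_one]
  · rintro ⟨r, hr, rfl⟩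
    have hrfix : PowerSeries.map (iterateFrobenius K p m) r = r := by
      ext i
      rw [PowerSeries.coeff_map, iterateFrobenius_def, ← hq]
      exact hr i
    calc (1 - PowerSeries.C θ * PowerSeries.X) * (r * s)
        = r * ((1 - PowerSeries.C θ * PowerSeries.X) * s) := by ring
      _ = r * PowerSeries.map (iterateFrobenius K p m) s := by rw [hs]
      _ = PowerSeries.map (iterateFrobenius K p m) (r * s) := by rw [map_mul, hrfix]
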